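/- Let μ be the sparse measure on 2^ℕ (marginals m_{n_k}({1}) = 2^k/(2^k+1) along the sparse index sequence n_0 = 0, n_{k+1} = n_k + 2^{k·(Σ_{i≤k} i)}, and m_n({1}) = 1/2 otherwise). For x ∈ 2^ℕ with infinitely many 1s, let n_0(x) < n_1(x) < ⋯ enumerate {n : x(n) = 1}, let r(n) = 2^{−k} if n = n_k and r(n) = 1 otherwise, and set C_k(x) = ∏_{i=0}^{k−1} r(n_i(x)). Then for μ-almost every x ∈ 2^ℕ, x has infinitely many 1s and lim_{k→∞} C_k(x) = 0; that is, the Radon–Nikodym cocycle vanishes along the forward geodesic of the least-deletion map. -/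

import Mathlib

open MeasureTheory Filter Set ENNReal

/-- `μ` is the product of the marginal measures `m n` on `Bool`. -/
def IsProductMeasure (μ : Measure (ℕ → Bool)) (m : ℕ → Measure Bool) : Prop :=
  ∀ (s : Finset ℕ) (a : ℕ → Bool),
    μ {x | ∀ n ∈ s, x n = a n} = ∏ n ∈ s, m n {a n}

/-- The sparse index sequence: `n₀ = 0` and `n_{k+1} = n_k + 2 ^ (k · Σ_{i ≤ k} i)`. -/
def sparseSeq : ℕ → ℕ
  | 0 => 0
  | k + 1 => sparseSeq k + 2 ^ (k * ∑ i ∈ Finset.range (k + 1), i)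

/-- `p_k = 2 ^ (Σ_{i ≤ k} i)`. -/
def sparseP (k : ℕ) : ℕ := 2 ^ (∑ i ∈ Finset.range (k + 1), i)

/-- The marginals of the sparse measure: `m (n_k) {1} = 2^k/(2^k+1)` along the sparse index
sequence, and `m n {1} = 1/2` for `n` not of the form `n_k`. -/
def IsSparseMarginals (m : ℕ → Measure Bool) : Prop :=
  (∀ k : ℕ, m (sparseSeq k) {true} = (2 ^ k : ℝ≥0∞) / (2 ^ k + 1)) ∧
    ∀ n : ℕ, (∀ k : ℕ, n ≠ sparseSeq k) → m n {true} = 1 / 2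

/-- The multiplicative jump `m n {0} / m n {1}` of the sparse measure: `r (n_k) = 2⁻ᵏ` along the
sparse index sequence and `r n = 1` otherwise. -/
def IsSparseJump (r : ℕ → ℝ≥0∞) : Prop :=
  (∀ k : ℕ, r (sparseSeq k) = ((2 : ℝ≥0∞) ^ k)⁻¹) ∧
    ∀ n : ℕ, (∀ k : ℕ, n ≠ sparseSeq k) → r n = 1

/-- The number of indices `i` with `n_k < i < n_{k+1}` and `x i = 1`. -/
def onesBetween (x : ℕ → Bool) (k : ℕ) : ℕ :=
  ((Finset.Ioo (sparseSeq k) (sparseSeq (k + 1))).filter fun i => x i = true).card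

/-!
Under `μ` the coordinate `x (n_k)` is `0` with probability `1 / (2 ^ k + 1) ≤ 2⁻ᵏ`, which is summable,
so by Borel–Cantelli almost every `x` has `x (n_k) = 1` for all large `k`; in particular `x` has
infinitely many `1`s. All factors `r n` are at most `1`, so once the enumeration of the `1`s of `x`
has passed such an `n_k`, the cocycle is at most `r (n_k) = 2⁻ᵏ`.
-/

lemma sparseSeq_strictMono : StrictMono sparseSeq :=
  strictMono_nat_of_lt_succ fun _ => Nat.lt_add_of_pos_right (Nat.pow_pos two_pos)

lemma IsSparseJump.le_one {r : ℕ → ℝ≥0∞} (hr : IsSparseJump r) (n : ℕ) : r n ≤ 1 := by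
  by_cases h : ∃ k, n = sparseSeq k
  · obtain ⟨k, rfl⟩ := h
    rw [hr.1 k]
    exact ENNReal.inv_le_one.mpr (one_le_pow₀ one_le_two)
  · rw [hr.2 n fun k hk => h ⟨k, hk⟩]

lemma IsSparseJump.tendsto_sparseSeq {r : ℕ → ℝ≥0∞} (hr : IsSparseJump r) :
    Tendsto (r ∘ sparseSeq) atTop (nhds 0) := by
  have hcomp : r ∘ sparseSeq = fun k => (2⁻¹ : ℝ≥0∞) ^ k := by
    ext k
    rw [Function.comp_apply, hr.1 k, ENNReal.inv_pow]
  rw [hcomp]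
  exact ENNReal.tendsto_pow_atTop_nhds_zero_of_lt_one ENNReal.one_half_lt_one

lemma IsProductMeasure.measure_eval_eq {μ : Measure (ℕ → Bool)} {m : ℕ → Measure Bool}
    (hμ : IsProductMeasure μ m) (n : ℕ) (b : Bool) : μ {x | x n = b} = m n {b} := by
  simpa using hμ {n} fun _ => b

lemma ENNReal.one_sub_div_add_one_le_inv {a : ℝ≥0∞} (ha : a ≠ ∞) : 1 - a / (a + 1) ≤ a⁻¹ := by
  rw [tsub_le_iff_right]
  calc (1 : ℝ≥0∞) = (a + 1) / (a + 1) := (ENNReal.div_self (by simp) (by simp [ha])).symm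
    _ = a / (a + 1) + 1 / (a + 1) := ENNReal.div_add_div_same.symm
    _ ≤ a / (a + 1) + a⁻¹ := by
      gcongr
      exact one_div (a + 1) ▸ ENNReal.inv_le_inv' le_self_add
    _ = a⁻¹ + a / (a + 1) := add_comm _ _

lemma IsSparseMarginals.measure_false_le {m : ℕ → Measure Bool} (hm : IsSparseMarginals m)
    (k : ℕ) [IsProbabilityMeasure (m (sparseSeq k))] : m (sparseSeq k) {false} ≤ 2⁻¹ ^ k := by
  rw [← Bool.not_true, ← Bool.compl_singleton, prob_compl_eq_one_sub (measurableSet_singleton _), hm.1 k, ← ENNReal.inv_pow]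
  exact ENNReal.one_sub_div_add_one_le_inv (pow_ne_top ofNat_ne_top)

lemma ae_eventually_sparseSeq_true {m : ℕ → Measure Bool}
    (hprob : ∀ n, IsProbabilityMeasure (m n)) (hm : IsSparseMarginals m)
    {μ : Measure (ℕ → Bool)} (hμ : IsProductMeasure μ m) :
    ∀ᵐ x ∂μ, ∀ᶠ k in atTop, x (sparseSeq k) = true := by
  have hsum : ∑' k, μ {x | x (sparseSeq k) = false} ≠ ∞ := by
    refine ne_top_of_le_ne_top ?_ (ENNReal.tsum_le_tsum (g := fun k => 2⁻¹ ^ k) fun k => ?_)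
    · rw [ENNReal.tsum_geometric, ENNReal.one_sub_inv_two, inv_inv]
      exact ofNat_ne_top
    · rw [hμ.measure_eval_eq]
      exact hm.measure_false_le k
  filter_upwards [ae_eventually_notMem hsum] with x hx
  simpa using hx

lemma prod_range_nth_le_of_count_lt {M : Type*} [CommMonoid M] [PartialOrder M]
    [MulLeftMono M] {p : ℕ → Prop} [DecidablePred p] {r : ℕ → M} (hr : ∀ n, r n ≤ 1)
    {n N : ℕ} (hn : p n) (hN : Nat.count p n < N) :
    ∏ i ∈ Finset.range N, r (Nat.nth p i) ≤ r n := by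
  rw [← Finset.mul_prod_erase _ _ (Finset.mem_range.mpr hN), Nat.nth_count hn]
  exact mul_le_of_le_one_right' (Finset.prod_le_one' fun _ _ => hr _)

lemma tendsto_prod_nth_zero {p : ℕ → Prop} {r : ℕ → ℝ≥0∞} (hr : ∀ n, r n ≤ 1) {s : ℕ → ℕ}
    (hps : ∀ᶠ k in atTop, p (s k)) (hrs : Tendsto (r ∘ s) atTop (nhds 0)) :
    Tendsto (fun N => ∏ i ∈ Finset.range N, r (Nat.nth p i)) atTop (nhds 0) := by
  classical
  rw [ENNReal.tendsto_atTop_zero]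
  intro ε hε
  obtain ⟨k, hpk, hrk⟩ := (hps.and (hrs.eventually (eventually_le_nhds hε))).exists
  exact ⟨Nat.count p (s k) + 1, fun N hN =>
    (prod_range_nth_le_of_count_lt hr hpk (by omega)).trans hrk⟩

/-- for the sparse product measure, almost every `x` has infinitely many `1`s and
its cocycle sequence `C k x = ∏_{i<k} r (nᵢ x)` along the forward geodesic of the least-deletion
map tends to `0`.  Here `n₀ x < n₁ x < ⋯` (given by `Nat.nth`) enumerates `{n | x n = 1}`. -/
theorem sparse_cocycle_tendsto_zero
    (m : ℕ → Measure Bool) (hprob : ∀ n, IsProbabilityMeasure (m n))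
    (hm : IsSparseMarginals m)
    (r : ℕ → ℝ≥0∞) (hr : IsSparseJump r)
    (μ : Measure (ℕ → Bool)) (hμ : IsProductMeasure μ m) :
    ∀ᵐ x ∂μ, {n : ℕ | x n = true}.Infinite ∧
      Tendsto (fun k => ∏ i ∈ Finset.range k, r (Nat.nth (fun n => x n = true) i)) atTop
        (nhds 0) := by
  filter_upwards [ae_eventually_sparseSeq_true hprob hm hμ] with x hx
  exact ⟨Nat.frequently_atTop_iff_infinite.mp
      (sparseSeq_strictMono.tendsto_atTop.frequently hx.frequently),
    tendsto_prod_nth_zero hr.le_one hx hr.tendsto_sparseSeq⟩
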